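/- (Proposition 3) Fix L ≥ 1 and for each layer ℓ = 1, …, L a continuous linear map W_ℓ : EuclideanSpace ℝ (Fin n_{ℓ−1}) →L[ℝ] EuclideanSpace ℝ (Fin n_ℓ). Let D^{(1)}, …, D^{(L)} be random mask vectors on a probability space, D^{(ℓ)} taking values in [0,1]^{n_ℓ}, independent across layers, with each coordinate square-integrable. Define for each layer the random contraction factor X_ℓ = max_i D^{(ℓ)}_i and μ_ℓ = √(E[X_ℓ²]) ∈ [0,1]. Then the expected product of masked layer operator norms satisfies E[∏_{ℓ=1}^L ‖Diag(D^{(ℓ)}) ∘ W_ℓ‖] ≤ (∏_{ℓ=1}^L μ_ℓ) · ∏_{ℓ=1}^L ‖W_ℓ‖, where Diag(d) denotes the linear map y ↦ d ⊙ y and ‖·‖ is the operator norm. In particular, the expected Lipschitz constant of a masked network with 1-Lipschitz activations is contracted by the factor ∏_ℓ μ_ℓ ≤ 1 relative to the unmasked spectral-norm product bound ∏_ℓ ‖W_ℓ‖. -/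

import Mathlib

/-!
For `d ≥ 0` one has `‖Diag(d) ∘ W‖ ≤ (max_i d_i) ‖W‖`, so the integrand is bounded by
`(∏ X_ℓ) ∏ ‖W_ℓ‖`. Independence of the masks factors `E[∏ X_ℓ] = ∏ E[X_ℓ]`, and
`E[X_ℓ] ≤ √(E[X_ℓ²]) = μ_ℓ` because the variance of `X_ℓ` is nonnegative.
-/

open MeasureTheory ProbabilityTheory

/-- The diagonal (coordinatewise multiplication) operator `y ↦ d ⊙ y` on
`EuclideanSpace ℝ (Fin n)`, as a continuous linear map. -/
noncomputable def diagCLM {n : ℕ} (d : EuclideanSpace ℝ (Fin n)) :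
    EuclideanSpace ℝ (Fin n) →L[ℝ] EuclideanSpace ℝ (Fin n) :=
  LinearMap.toContinuousLinearMap
    { toFun := fun y => (WithLp.toLp 2 (fun i => d i * y i) : EuclideanSpace ℝ (Fin n))
      map_add' := by
        intro x y
        ext i
        simp [mul_add]
      map_smul' := by
        intro c x
        ext i
        simp [mul_comm, mul_left_comm] }

theorem diagCLM_apply {n : ℕ} (d y : EuclideanSpace ℝ (Fin n)) (i : Fin n) :
    diagCLM d y i = d i * y i :=
  rfl

theorem norm_diagCLM_le {n : ℕ} {d : EuclideanSpace ℝ (Fin n)} {c : ℝ} (hc : 0 ≤ c)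
    (hd : ∀ i, |d i| ≤ c) : ‖diagCLM d‖ ≤ c := by
  refine ContinuousLinearMap.opNorm_le_bound _ hc fun y => ?_
  refine le_of_pow_le_pow_left₀ two_ne_zero (by positivity) ?_
  rw [mul_pow, EuclideanSpace.norm_sq_eq, EuclideanSpace.norm_sq_eq, Finset.mul_sum]
  gcongr with i
  rw [diagCLM_apply, norm_mul, mul_pow, Real.norm_eq_abs]
  gcongr
  exact hd i

theorem norm_diagCLM_comp_le {n : ℕ} {E : Type*} [SeminormedAddCommGroup E] [NormedSpace ℝ E]
    {d : EuclideanSpace ℝ (Fin n)} (hd : ∀ i, 0 ≤ d i) (W : E →L[ℝ] EuclideanSpace ℝ (Fin n)) :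
    ‖(diagCLM d).comp W‖ ≤ (⨆ i, d i) * ‖W‖ := by
  refine (ContinuousLinearMap.opNorm_comp_le _ _).trans ?_
  gcongr
  exact norm_diagCLM_le (Real.iSup_nonneg hd) fun i =>
    (abs_of_nonneg (hd i)).trans_le (le_ciSup (Finite.bddAbove_range _) i)

theorem measurable_iSup_apply (n : ℕ) :
    Measurable fun d : EuclideanSpace ℝ (Fin n) => ⨆ i, d i :=
  Measurable.iSup fun i => (measurable_pi_apply i).comp (WithLp.measurable_ofLp 2 _)

theorem sq_integral_le_integral_sq {Ω : Type*} {m : MeasurableSpace Ω} {μ : Measure Ω}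
    [IsProbabilityMeasure μ] {X : Ω → ℝ} (hX : MemLp X 2 μ) :
    (∫ ω, X ω ∂μ) ^ 2 ≤ ∫ ω, X ω ^ 2 ∂μ := by
  have := variance_nonneg X μ
  rw [variance_eq_sub hX] at this
  simpa [sub_nonneg] using this

theorem integral_le_sqrt_integral_sq {Ω : Type*} {m : MeasurableSpace Ω} {μ : Measure Ω}
    [IsProbabilityMeasure μ] {X : Ω → ℝ} (hX : MemLp X 2 μ) :
    ∫ ω, X ω ∂μ ≤ √(∫ ω, X ω ^ 2 ∂μ) :=
  (le_abs_self _).trans (Real.abs_le_sqrt (sq_integral_le_integral_sq hX))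

theorem integrable_fun_prod_of_abs_le_one {ι Ω : Type*} [Fintype ι] {m : MeasurableSpace Ω}
    {μ : Measure Ω} [IsFiniteMeasure μ] {X : ι → Ω → ℝ}
    (hX : ∀ i, AEStronglyMeasurable (X i) μ) (hX1 : ∀ i ω, |X i ω| ≤ 1) :
    Integrable (fun ω => ∏ i, X i ω) μ := by
  refine .of_bound (Finset.aestronglyMeasurable_fun_prod _ fun i _ => hX i) 1
    (.of_forall fun ω => ?_)
  rw [Real.norm_eq_abs, Finset.abs_prod]
  exact Finset.prod_le_one (fun i _ => abs_nonneg _) fun i _ => hX1 i ω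

theorem expected_masked_lipschitz_contraction_general {Ω : Type*} [MeasureSpace Ω]
    [IsProbabilityMeasure (ℙ : Measure Ω)]
    (L : ℕ) (n : ℕ → ℕ)
    (W : ∀ ℓ : Fin L,
      EuclideanSpace ℝ (Fin (n ℓ)) →L[ℝ] EuclideanSpace ℝ (Fin (n ((ℓ : ℕ) + 1))))
    (D : ∀ ℓ : Fin L, Ω → EuclideanSpace ℝ (Fin (n ((ℓ : ℕ) + 1))))
    (hD01 : ∀ ℓ ω i, 0 ≤ D ℓ ω i ∧ D ℓ ω i ≤ 1)
    (hmeas : ∀ ℓ, Measurable (D ℓ))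
    (hindep : iIndepFun D ℙ)
    (hL2 : ∀ ℓ, MemLp (fun ω => ⨆ i, D ℓ ω i) 2 ℙ)
    (μfac : Fin L → ℝ)
    (hμ : ∀ ℓ, μfac ℓ = Real.sqrt (∫ ω, (⨆ i, D ℓ ω i) ^ 2)) :
    (∫ ω, ∏ ℓ, ‖(diagCLM (D ℓ ω)).comp (W ℓ)‖)
      ≤ (∏ ℓ, μfac ℓ) * ∏ ℓ, ‖W ℓ‖ := by
  set X : Fin L → Ω → ℝ := fun ℓ ω => ⨆ i, D ℓ ω i
  have hX0 : ∀ ℓ ω, 0 ≤ X ℓ ω := fun ℓ ω => Real.iSup_nonneg fun i => (hD01 ℓ ω i).1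
  have hX1 : ∀ ℓ ω, X ℓ ω ≤ 1 := fun ℓ ω => Real.iSup_le (fun i => (hD01 ℓ ω i).2) zero_le_one
  have hint : Integrable (fun ω => (∏ ℓ, X ℓ ω) * ∏ ℓ, ‖W ℓ‖) ℙ :=
    (integrable_fun_prod_of_abs_le_one
      (fun ℓ => ((measurable_iSup_apply _).comp (hmeas ℓ)).aestronglyMeasurable)
      fun ℓ ω => (abs_of_nonneg (hX0 ℓ ω)).trans_le (hX1 ℓ ω)).mul_const _
  calc (∫ ω, ∏ ℓ, ‖(diagCLM (D ℓ ω)).comp (W ℓ)‖)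
      ≤ ∫ ω, (∏ ℓ, X ℓ ω) * ∏ ℓ, ‖W ℓ‖ := by
        refine integral_mono_of_nonneg (.of_forall fun ω => by positivity) hint
          (.of_forall fun ω => ?_)
        simp only [← Finset.prod_mul_distrib]
        gcongr with ℓ
        exact norm_diagCLM_comp_le (fun i => (hD01 ℓ ω i).1) _
    _ = (∏ ℓ, ∫ ω, X ℓ ω) * ∏ ℓ, ‖W ℓ‖ := by
        rw [integral_mul_const, hindep.integral_fun_prod_comp (fun ℓ => (hmeas ℓ).aemeasurable)
          fun ℓ => (measurable_iSup_apply _).aestronglyMeasurable]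
    _ ≤ (∏ ℓ, μfac ℓ) * ∏ ℓ, ‖W ℓ‖ := by
        gcongr with ℓ
        · exact fun ℓ _ => integral_nonneg (hX0 ℓ)
        · exact (hμ ℓ).symm ▸ integral_le_sqrt_integral_sq (hL2 ℓ)

/-- Proposition 3: for independent random masks `D^{(ℓ)}` with values in `[0,1]^{n_ℓ}`,
setting `X_ℓ = max_i D^{(ℓ)}_i` and `μ_ℓ = √(E[X_ℓ²])`, the expected product of masked
layer operator norms satisfies
`E[∏_ℓ ‖Diag(D^{(ℓ)}) ∘ W_ℓ‖] ≤ (∏_ℓ μ_ℓ) ∏_ℓ ‖W_ℓ‖`. -/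
theorem expected_masked_lipschitz_contraction {Ω : Type*} [MeasureSpace Ω]
    [IsProbabilityMeasure (ℙ : Measure Ω)]
    (L : ℕ) (hL : 1 ≤ L) (n : ℕ → ℕ)
    (W : ∀ ℓ : Fin L,
      EuclideanSpace ℝ (Fin (n ℓ)) →L[ℝ] EuclideanSpace ℝ (Fin (n ((ℓ : ℕ) + 1))))
    (D : ∀ ℓ : Fin L, Ω → EuclideanSpace ℝ (Fin (n ((ℓ : ℕ) + 1))))
    (hD01 : ∀ ℓ ω i, 0 ≤ D ℓ ω i ∧ D ℓ ω i ≤ 1)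
    (hmeas : ∀ ℓ, Measurable (D ℓ))
    (hindep : iIndepFun D ℙ)
    (hL2 : ∀ ℓ, MemLp (fun ω => ⨆ i, D ℓ ω i) 2 ℙ)
    (μfac : Fin L → ℝ)
    (hμ : ∀ ℓ, μfac ℓ = Real.sqrt (∫ ω, (⨆ i, D ℓ ω i) ^ 2)) :
    (∫ ω, ∏ ℓ, ‖(diagCLM (D ℓ ω)).comp (W ℓ)‖)
      ≤ (∏ ℓ, μfac ℓ) * ∏ ℓ, ‖W ℓ‖ :=
  expected_masked_lipschitz_contraction_general L n W D hD01 hmeas hindep hL2 μfac hμ
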